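/- arXiv:2003.09830 — 2 statements merged into one kernel-verified Lean document; each statement's English description precedes it below -/
import Mathlib

section
/- Fix R > 0, a saturation threshold σ ∈ ℕ, and d ≥ 1. The Geyer saturation model has finite interaction range 2R: for every finite set x ⊂ ℝ^d and every u ∈ ℝ^d with u ∉ x, s(x ∪ {u}) − s(x) = s(y ∪ {u}) − s(y), where y = {v ∈ x : ‖v − u‖ ≤ 2R} is the restriction of x to the closed ball of radius 2R centred at u. -/
open scoped Classical

/-- The number of `R`-neighbours of `v` in the finite configuration `x`:
`τ(v, x) = #{w ∈ x : w ≠ v, ‖w − v‖ ≤ R}`. -/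
noncomputable def nbr (d : ℕ) (R : ℝ) (v : EuclideanSpace ℝ (Fin d))
    (x : Finset (EuclideanSpace ℝ (Fin d))) : ℕ :=
  (x.filter fun w => w ≠ v ∧ ‖w - v‖ ≤ R).card

/-- The Geyer saturation statistic with saturation threshold `σ`:
`s(x) = Σ_{v ∈ x} min(σ, τ(v, x))`. -/
noncomputable def geyerS (d : ℕ) (R : ℝ) (σ : ℕ)
    (x : Finset (EuclideanSpace ℝ (Fin d))) : ℕ :=
  ∑ v ∈ x, min σ (nbr d R v x)

lemma nbr_insert (d : ℕ) (R : ℝ) (v u : EuclideanSpace ℝ (Fin d))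
    (x : Finset (EuclideanSpace ℝ (Fin d))) (hv : v ∈ x) (hu : u ∉ x) :
    nbr d R v (insert u x) = nbr d R v x + (if ‖u - v‖ ≤ R then 1 else 0) := by
  have huv : u ≠ v := fun h => hu (h ▸ hv)
  unfold nbr
  rw [Finset.filter_insert]
  by_cases h : ‖u - v‖ ≤ R
  · rw [if_pos ⟨huv, h⟩, if_pos h,
      Finset.card_insert_of_notMem (fun hm => hu (Finset.mem_filter.mp hm).1)]
  · rw [if_neg (fun hc => h hc.2), if_neg h, add_zero]

lemma nbr_self_insert (d : ℕ) (R : ℝ) (u : EuclideanSpace ℝ (Fin d))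
    (x : Finset (EuclideanSpace ℝ (Fin d))) (hu : u ∉ x) :
    nbr d R u (insert u x) = (x.filter fun w => ‖w - u‖ ≤ R).card := by
  unfold nbr
  congr 1
  rw [Finset.filter_insert, if_neg (by simp)]
  apply Finset.filter_congr
  intro w hw
  have : w ≠ u := fun h => hu (h ▸ hw)
  simp [this]

lemma nbr_filter (d : ℕ) (R : ℝ) (v u : EuclideanSpace ℝ (Fin d))
    (x : Finset (EuclideanSpace ℝ (Fin d))) (h : ‖u - v‖ ≤ R) :
    nbr d R v (x.filter fun w => ‖w - u‖ ≤ 2 * R) = nbr d R v x := by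
  unfold nbr
  rw [Finset.filter_filter]
  congr 1
  ext w
  simp only [Finset.mem_filter]
  constructor
  · rintro ⟨hw, -, hc⟩; exact ⟨hw, hc⟩
  · rintro ⟨hw, hne, hle⟩
    refine ⟨hw, ?_, hne, hle⟩
    calc ‖w - u‖ = ‖(w - v) + (v - u)‖ := by rw [sub_add_sub_cancel]
      _ ≤ ‖w - v‖ + ‖v - u‖ := norm_add_le _ _
      _ ≤ R + R := add_le_add hle (by rwa [norm_sub_rev])
      _ = 2 * R := by ring

/-- Fix `R > 0`, a saturation threshold `σ ∈ ℕ`, and `d ≥ 1`. The Geyer saturation model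
has finite interaction range `2R`: for every finite set `x ⊂ ℝ^d` and every `u ∉ x`,
`s(x ∪ {u}) − s(x) = s(y ∪ {u}) − s(y)` where `y = {v ∈ x : ‖v − u‖ ≤ 2R}` is the
restriction of `x` to the closed ball of radius `2R` centred at `u`. -/
theorem geyerS_finite_range (d : ℕ) (hd : 1 ≤ d) (R : ℝ) (hR : 0 < R) (σ : ℕ)
    (x : Finset (EuclideanSpace ℝ (Fin d))) (u : EuclideanSpace ℝ (Fin d)) (hu : u ∉ x) :
    (geyerS d R σ (insert u x) : ℤ) - (geyerS d R σ x : ℤ) =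
      (geyerS d R σ (insert u (x.filter fun v => ‖v - u‖ ≤ 2 * R)) : ℤ) -
        (geyerS d R σ (x.filter fun v => ‖v - u‖ ≤ 2 * R) : ℤ) := by
  set y := x.filter fun v => ‖v - u‖ ≤ 2 * R with hy
  have huy : u ∉ y := fun h => hu (Finset.mem_filter.mp h).1
  have expand : ∀ z : Finset (EuclideanSpace ℝ (Fin d)), u ∉ z →
      (geyerS d R σ (insert u z) : ℤ) - (geyerS d R σ z : ℤ) =
        (min σ ((z.filter fun w => ‖w - u‖ ≤ R).card) : ℤ) +
          ∑ v ∈ z, ((min σ (nbr d R v z + if ‖u - v‖ ≤ R then 1 else 0) : ℤ)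
            - (min σ (nbr d R v z) : ℤ)) := by
    intro z hz
    have h1 : geyerS d R σ (insert u z) = min σ ((z.filter fun w => ‖w - u‖ ≤ R).card)
        + ∑ v ∈ z, min σ (nbr d R v z + if ‖u - v‖ ≤ R then 1 else 0) := by
      unfold geyerS
      rw [Finset.sum_insert hz, nbr_self_insert d R u z hz]
      congr 1
      exact Finset.sum_congr rfl fun v hv => by rw [nbr_insert d R v u z hv hz]
    rw [h1]
    unfold geyerS
    push_cast
    rw [Finset.sum_sub_distrib]
    ring
  rw [expand x hu, expand y huy]
  have hfilter : (y.filter fun w => ‖w - u‖ ≤ R) = x.filter fun w => ‖w - u‖ ≤ R := by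
    rw [hy, Finset.filter_filter]
    apply Finset.filter_congr
    intro w _
    constructor
    · rintro ⟨-, h⟩; exact h
    · intro h; exact ⟨h.trans (by linarith), h⟩
  rw [hfilter]
  congr 1
  have step1 : ∑ v ∈ x, ((min σ (nbr d R v x + if ‖u - v‖ ≤ R then 1 else 0) : ℤ)
      - (min σ (nbr d R v x) : ℤ))
      = ∑ v ∈ y, ((min σ (nbr d R v x + if ‖u - v‖ ≤ R then 1 else 0) : ℤ)
      - (min σ (nbr d R v x) : ℤ)) := by
    rw [hy]
    symm
    apply Finset.sum_filter_of_ne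
    intro v _ hne
    by_contra hgt
    push_neg at hgt
    have : ¬ ‖u - v‖ ≤ R := by rw [norm_sub_rev]; intro h; linarith
    rw [if_neg this, add_zero, sub_self] at hne
    exact hne rfl
  rw [step1]
  apply Finset.sum_congr rfl
  intro v hv
  by_cases h : ‖u - v‖ ≤ R
  · rw [nbr_filter d R v u x h]
  · simp [h]
end

section
/- Fix d ≥ 1. There exists a constant C, depending only on the dimension d, such that for every saturation threshold σ ∈ ℕ, every R > 0, every finite set x ⊂ ℝ^d, and every u ∈ ℝ^d with u ∉ x, the Geyer saturation statistic satisfies s(x ∪ {u}) − s(x) ≤ σ(1 + C). In particular the Geyer saturation model is locally stable: its Papangelou conditional intensity exp(β + ψ·(s(x ∪ {u}) − s(x))) is uniformly bounded over all u and x. -/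
open scoped Classical

open Metric Finset

lemma nbr_mono (d : ℕ) (R : ℝ) (v : EuclideanSpace ℝ (Fin d))
    {x y : Finset (EuclideanSpace ℝ (Fin d))} (h : x ⊆ y) :
    nbr d R v x ≤ nbr d R v y :=
  Finset.card_le_card (Finset.filter_subset_filter _ h)

lemma nbr_insert_le (d : ℕ) (R : ℝ) (v u : EuclideanSpace ℝ (Fin d))
    (x : Finset (EuclideanSpace ℝ (Fin d))) :
    nbr d R v (insert u x) ≤ nbr d R v x + 1 := by
  unfold nbr
  rw [Finset.filter_insert]
  split
  · exact Finset.card_insert_le _ _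
  · exact Nat.le_succ_of_le le_rfl

lemma nbr_insert_far (d : ℕ) (R : ℝ) (v u : EuclideanSpace ℝ (Fin d))
    (x : Finset (EuclideanSpace ℝ (Fin d))) (h : ¬ ‖v - u‖ ≤ R) :
    nbr d R v (insert u x) = nbr d R v x := by
  unfold nbr
  rw [Finset.filter_insert, if_neg]
  rintro ⟨-, h2⟩
  rw [norm_sub_rev] at h2
  exact h h2

/-- The key combinatorial bound, with `C` the cardinality of a finite `1/2`-net of the
unit ball. -/
lemma geyerS_insert_le (d : ℕ) (t : Finset (EuclideanSpace ℝ (Fin d)))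
    (ht : closedBall (0 : EuclideanSpace ℝ (Fin d)) 1 ⊆ ⋃ c ∈ t, ball c (1/2))
    (σ : ℕ) (R : ℝ) (hR : 0 < R) (x : Finset (EuclideanSpace ℝ (Fin d)))
    (u : EuclideanSpace ℝ (Fin d)) (hu : u ∉ x) :
    geyerS d R σ (insert u x) ≤ geyerS d R σ x + σ * (1 + t.card) := by
  classical
  set A : Finset (EuclideanSpace ℝ (Fin d)) :=
    x.filter (fun v => ‖v - u‖ ≤ R ∧ nbr d R v x < σ) with hA
  -- Step 1: per-point bound
  have step1 : geyerS d R σ (insert u x) ≤ geyerS d R σ x + σ + A.card := by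
    unfold geyerS
    rw [Finset.sum_insert hu]
    have h1 : min σ (nbr d R u (insert u x)) ≤ σ := min_le_left _ _
    have h2 : ∑ v ∈ x, min σ (nbr d R v (insert u x)) ≤
        (∑ v ∈ x, min σ (nbr d R v x)) + A.card := by
      have : A.card = ∑ v ∈ x, (if ‖v - u‖ ≤ R ∧ nbr d R v x < σ then 1 else 0) := by
        rw [hA, Finset.card_filter]
      rw [this, ← Finset.sum_add_distrib]
      apply Finset.sum_le_sum
      intro v hv
      have hle : nbr d R v x ≤ nbr d R v (insert u x) :=
        nbr_mono d R v (Finset.subset_insert u x)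
      have hle1 : nbr d R v (insert u x) ≤ nbr d R v x + 1 := nbr_insert_le d R v u x
      by_cases hd1 : ‖v - u‖ ≤ R
      · by_cases hd2 : nbr d R v x < σ
        · simp only [hd1, hd2, and_self, if_true]
          omega
        · simp only [hd1, hd2, and_false, if_false]
          omega
      · rw [nbr_insert_far d R v u x hd1]
        omega
    omega
  -- Step 2: A.card ≤ t.card * σ
  have step2 : A.card ≤ t.card * σ := by
    have hsub : A ⊆ t.biUnion (fun c =>
        A.filter (fun v => ‖R⁻¹ • (v - u) - c‖ < 1/2)) := by
      intro v hv
      have hvA := hv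
      rw [hA, Finset.mem_filter] at hvA
      obtain ⟨hvx, hvu, -⟩ := hvA
      have hmem : R⁻¹ • (v - u) ∈ closedBall (0 : EuclideanSpace ℝ (Fin d)) 1 := by
        rw [mem_closedBall, dist_zero_right, norm_smul, norm_inv, Real.norm_eq_abs,
          abs_of_pos hR]
        rw [inv_mul_le_iff₀ hR]
        linarith
      obtain ⟨c, hct, hc⟩ := Set.mem_iUnion₂.1 (ht hmem)
      rw [mem_ball, dist_eq_norm] at hc
      exact Finset.mem_biUnion.2 ⟨c, hct, Finset.mem_filter.2 ⟨hv, hc⟩⟩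
    calc A.card ≤ (t.biUnion (fun c =>
          A.filter (fun v => ‖R⁻¹ • (v - u) - c‖ < 1/2))).card :=
        Finset.card_le_card hsub
      _ ≤ ∑ c ∈ t, (A.filter (fun v => ‖R⁻¹ • (v - u) - c‖ < 1/2)).card :=
        Finset.card_biUnion_le
      _ ≤ ∑ c ∈ t, σ := by
        apply Finset.sum_le_sum
        intro c hc
        set B := A.filter (fun v => ‖R⁻¹ • (v - u) - c‖ < 1/2) with hB
        rcases B.eq_empty_or_nonempty with hBe | ⟨v, hvB⟩
        · rw [hBe]; simp
        · have hvB' := hvB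
          rw [hB, Finset.mem_filter, hA, Finset.mem_filter] at hvB'
          obtain ⟨⟨hvx, -, hvσ⟩, hvc⟩ := hvB'
          have hsubB : B.erase v ⊆ x.filter (fun w => w ≠ v ∧ ‖w - v‖ ≤ R) := by
            intro w hw
            obtain ⟨hwv, hwB⟩ := Finset.mem_erase.1 hw
            have hwB' := hwB
            rw [hB, Finset.mem_filter, hA, Finset.mem_filter] at hwB'
            obtain ⟨⟨hwx, -, -⟩, hwc⟩ := hwB'
            refine Finset.mem_filter.2 ⟨hwx, hwv, ?_⟩
            have hkey : ‖R⁻¹ • (w - v)‖ < 1 := by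
              have : R⁻¹ • (w - v) = (R⁻¹ • (w - u) - c) - (R⁻¹ • (v - u) - c) := by
                module
              rw [this]
              calc ‖(R⁻¹ • (w - u) - c) - (R⁻¹ • (v - u) - c)‖
                  ≤ ‖R⁻¹ • (w - u) - c‖ + ‖R⁻¹ • (v - u) - c‖ := norm_sub_le _ _
                _ < 1/2 + 1/2 := add_lt_add hwc hvc
                _ = 1 := by norm_num
            have : ‖w - v‖ = R * ‖R⁻¹ • (w - v)‖ := by
              rw [norm_smul, norm_inv, Real.norm_eq_abs, abs_of_pos hR]
              field_simp
            rw [this]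
            nlinarith [norm_nonneg (R⁻¹ • (w - v))]
          have hcard : (B.erase v).card ≤ nbr d R v x :=
            Finset.card_le_card hsubB
          have herase : (B.erase v).card = B.card - 1 :=
            Finset.card_erase_of_mem hvB
          have hpos : 1 ≤ B.card := Finset.card_pos.2 ⟨v, hvB⟩
          omega
      _ = t.card * σ := by rw [Finset.sum_const, smul_eq_mul]
  have hmul : σ * (1 + t.card) = σ + t.card * σ := by ring
  omega

lemma geyerS_le_insert (d : ℕ) (R : ℝ) (σ : ℕ)
    (x : Finset (EuclideanSpace ℝ (Fin d))) (u : EuclideanSpace ℝ (Fin d)) (hu : u ∉ x) :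
    geyerS d R σ x ≤ geyerS d R σ (insert u x) := by
  unfold geyerS
  rw [Finset.sum_insert hu]
  calc ∑ v ∈ x, min σ (nbr d R v x) ≤ ∑ v ∈ x, min σ (nbr d R v (insert u x)) := by
        apply Finset.sum_le_sum
        intro v hv
        exact min_le_min le_rfl (nbr_mono d R v (Finset.subset_insert u x))
    _ ≤ _ := Nat.le_add_left _ _

/-- Fix `d ≥ 1`. There is a constant `C`, depending only on the dimension `d`, such that
for every saturation threshold `σ`, every `R > 0`, every finite set `x ⊂ ℝ^d` and every
`u ∉ x`, the Geyer saturation statistic satisfies `s(x ∪ {u}) − s(x) ≤ σ(1 + C)`. In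
particular the Geyer saturation model is locally stable: its Papangelou conditional
intensity `exp(β + ψ·(s(x ∪ {u}) − s(x)))` is uniformly bounded over all `u` and `x`. -/
theorem geyerS_locally_stable (d : ℕ) (hd : 1 ≤ d) :
    ∃ C : ℕ,
      (∀ (σ : ℕ) (R : ℝ), 0 < R →
        ∀ (x : Finset (EuclideanSpace ℝ (Fin d))) (u : EuclideanSpace ℝ (Fin d)),
          u ∉ x → geyerS d R σ (insert u x) ≤ geyerS d R σ x + σ * (1 + C)) ∧
      (∀ (σ : ℕ) (R : ℝ), 0 < R → ∀ β ψ : ℝ, ∃ M : ℝ,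
        ∀ (x : Finset (EuclideanSpace ℝ (Fin d))) (u : EuclideanSpace ℝ (Fin d)),
          u ∉ x →
            Real.exp (β + ψ * ((geyerS d R σ (insert u x) : ℝ) - (geyerS d R σ x : ℝ)))
              ≤ M) := by
  classical
  -- a finite 1/2-net of the closed unit ball
  obtain ⟨t, ht⟩ : ∃ t : Finset (EuclideanSpace ℝ (Fin d)),
      closedBall (0 : EuclideanSpace ℝ (Fin d)) 1 ⊆ ⋃ c ∈ t, ball c (1/2) := by
    obtain ⟨t, ht⟩ := (isCompact_closedBall (0 : EuclideanSpace ℝ (Fin d)) 1).elim_finite_subcover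
      (fun c : EuclideanSpace ℝ (Fin d) => ball c (1/2)) (fun c => isOpen_ball)
      (fun v hv => Set.mem_iUnion.2 ⟨v, mem_ball_self (by norm_num)⟩)
    exact ⟨t, ht⟩
  refine ⟨t.card, fun σ R hR x u hu => geyerS_insert_le d t ht σ R hR x u hu, ?_⟩
  intro σ R hR β ψ
  refine ⟨Real.exp (β + |ψ| * (σ * (1 + t.card))), fun x u hu => ?_⟩
  apply Real.exp_le_exp.2
  have h1 : geyerS d R σ (insert u x) ≤ geyerS d R σ x + σ * (1 + t.card) :=
    geyerS_insert_le d t ht σ R hR x u hu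
  have h2 : geyerS d R σ x ≤ geyerS d R σ (insert u x) := geyerS_le_insert d R σ x u hu
  set Δ : ℝ := (geyerS d R σ (insert u x) : ℝ) - (geyerS d R σ x : ℝ) with hΔ
  have hΔ0 : 0 ≤ Δ := by
    rw [hΔ, sub_nonneg]
    exact_mod_cast h2
  have hΔle : Δ ≤ (σ : ℝ) * (1 + t.card) := by
    rw [hΔ, sub_le_iff_le_add]
    have : (geyerS d R σ (insert u x) : ℝ) ≤ ((geyerS d R σ x + σ * (1 + t.card) : ℕ) : ℝ) := by
      exact_mod_cast h1
    push_cast at this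
    linarith
  have : ψ * Δ ≤ |ψ| * ((σ : ℝ) * (1 + t.card)) := by
    calc ψ * Δ ≤ |ψ| * Δ := mul_le_mul_of_nonneg_right (le_abs_self ψ) hΔ0
      _ ≤ |ψ| * ((σ : ℝ) * (1 + t.card)) :=
        mul_le_mul_of_nonneg_left hΔle (abs_nonneg ψ)
  linarith
end
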